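/- Top-eigenspace closeness lemma: Let W be a finite-dimensional complex inner product space, K := Z⊗H + Z⊗H' + X⊗H − X⊗H' on ℂ² ⊗ ℂ², and let Ψ ∈ (ℂ² ⊗ ℂ²) ⊗ W be a unit vector with Re⟨Ψ, (K ⊗ I) Ψ⟩ ≥ 2√2 − δ for some 0 ≤ δ < 2√2. Write Ψ = |Φ+⟩ ⊗ w₊ + |Φ−⟩ ⊗ w₋ + |Ψ+⟩ ⊗ u₊ + |Ψ−⟩ ⊗ u₋ in the Bell basis. Then ‖w₊‖² ≥ 1 − δ/(2√2), and with junk := w₊/‖w₊‖ one has ‖Ψ − |Φ+⟩ ⊗ junk‖ ≤ √(δ/√2). -/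

import Mathlib

set_option maxHeartbeats 1000000
set_option synthInstance.maxHeartbeats 400000
set_option synthInstance.maxSize 2048

noncomputable section

open scoped TensorProduct
open Module

/-! ## The canonical inner product space structure on tensor products -/

section TensorInner

variable (E F : Type*) [NormedAddCommGroup E] [InnerProductSpace ℂ E] [FiniteDimensional ℂ E]
  [NormedAddCommGroup F] [InnerProductSpace ℂ F] [FiniteDimensional ℂ F]

/-- Coordinate representation of `E ⊗[ℂ] F` with respect to the tensor product of
orthonormal bases of `E` and `F`. -/
def tensorRepr : (E ⊗[ℂ] F) ≃ₗ[ℂ]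
    EuclideanSpace ℂ (Fin (finrank ℂ E) × Fin (finrank ℂ F)) :=
  (((stdOrthonormalBasis ℂ E).toBasis.tensorProduct
      (stdOrthonormalBasis ℂ F).toBasis).equivFun).trans
    (WithLp.linearEquiv 2 ℂ ((Fin (finrank ℂ E) × Fin (finrank ℂ F)) → ℂ)).symm

/-- The canonical inner product on the tensor product of two finite-dimensional complex
inner product spaces; it satisfies `⟪a ⊗ b, c ⊗ d⟫ = ⟪a, c⟫ * ⟪b, d⟫`. -/
def tensorCore : InnerProductSpace.Core ℂ (E ⊗[ℂ] F) where
  inner x y := inner ℂ (tensorRepr E F x) (tensorRepr E F y)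
  conj_inner_symm x y := inner_conj_symm (𝕜 := ℂ) (tensorRepr E F x) (tensorRepr E F y)
  re_inner_nonneg x := inner_self_nonneg (𝕜 := ℂ) (x := tensorRepr E F x)
  add_left x y z := by simp [map_add, inner_add_left]
  smul_left x y r := by simp [map_smul, inner_smul_left, mul_comm]
  definite x h := by
    have h0 : tensorRepr E F x = 0 := inner_self_eq_zero.mp h
    simpa using (LinearEquiv.map_eq_zero_iff _).mp h0

noncomputable instance tensorNormedAddCommGroup : NormedAddCommGroup (E ⊗[ℂ] F) :=
  (tensorCore E F).toNormedAddCommGroup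

noncomputable instance tensorInnerProductSpace : InnerProductSpace ℂ (E ⊗[ℂ] F) :=
  InnerProductSpace.ofCore (tensorCore E F).toCore

end TensorInner

notation "⟪" x ", " y "⟫" => (inner (𝕜 := ℂ) x y)

/-! ## Qubits, standard states and gates -/

/-- The qubit space `ℂ²`. -/
abbrev Qubit := EuclideanSpace ℂ (Fin 2)

/-- The standard basis state `|0⟩`. -/
def ket0 : Qubit := EuclideanSpace.single 0 1

/-- The standard basis state `|1⟩`. -/
def ket1 : Qubit := EuclideanSpace.single 1 1

/-- The rank-one operator `|a⟩⟨b|` on an inner product space. -/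
def ketbra {H : Type*} [NormedAddCommGroup H] [InnerProductSpace ℂ H] (a b : H) :
    H →ₗ[ℂ] H where
  toFun v := (inner ℂ b v : ℂ) • a
  map_add' u v := by simp [inner_add_right, add_smul]
  map_smul' c v := by simp [inner_smul_right, smul_smul]

/-- The projector `|0⟩⟨0|`. -/
def proj0 : Qubit →ₗ[ℂ] Qubit := ketbra ket0 ket0

/-- The projector `|1⟩⟨1|`. -/
def proj1 : Qubit →ₗ[ℂ] Qubit := ketbra ket1 ket1

/-- The Pauli operator `σ_z = |0⟩⟨0| - |1⟩⟨1|`. -/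
def pauliZ : Qubit →ₗ[ℂ] Qubit := ketbra ket0 ket0 - ketbra ket1 ket1

/-- The Pauli operator `σ_x = |0⟩⟨1| + |1⟩⟨0|`. -/
def pauliX : Qubit →ₗ[ℂ] Qubit := ketbra ket0 ket1 + ketbra ket1 ket0

/-- The Hadamard gate `H = (Z + X)/√2`. -/
def Hadamard : Qubit →ₗ[ℂ] Qubit := ((Real.sqrt 2 : ℂ))⁻¹ • (pauliZ + pauliX)

/-- The reflected Hadamard gate `H' = (Z - X)/√2`. -/
def HadamardPrime : Qubit →ₗ[ℂ] Qubit := ((Real.sqrt 2 : ℂ))⁻¹ • (pauliZ - pauliX)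

/-- The rotation `R = sin(π/8)·X + cos(π/8)·Z`, satisfying `RZR† = H`, `RXR† = H'`. -/
def Rotation : Qubit →ₗ[ℂ] Qubit :=
  (Real.sin (Real.pi / 8) : ℂ) • pauliX + (Real.cos (Real.pi / 8) : ℂ) • pauliZ

/-! ## Bell states -/

/-- The Bell state `|Φ+⟩ = (|00⟩ + |11⟩)/√2`. -/
def bellPhiPlus : Qubit ⊗[ℂ] Qubit :=
  ((Real.sqrt 2 : ℂ))⁻¹ • (ket0 ⊗ₜ[ℂ] ket0 + ket1 ⊗ₜ[ℂ] ket1)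

/-- The Bell state `|Φ−⟩ = (|00⟩ − |11⟩)/√2`. -/
def bellPhiMinus : Qubit ⊗[ℂ] Qubit :=
  ((Real.sqrt 2 : ℂ))⁻¹ • (ket0 ⊗ₜ[ℂ] ket0 - ket1 ⊗ₜ[ℂ] ket1)

/-- The Bell state `|Ψ+⟩ = (|01⟩ + |10⟩)/√2`. -/
def bellPsiPlus : Qubit ⊗[ℂ] Qubit :=
  ((Real.sqrt 2 : ℂ))⁻¹ • (ket0 ⊗ₜ[ℂ] ket1 + ket1 ⊗ₜ[ℂ] ket0)

/-- The Bell state `|Ψ−⟩ = (|01⟩ − |10⟩)/√2`. -/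
def bellPsiMinus : Qubit ⊗[ℂ] Qubit :=
  ((Real.sqrt 2 : ℂ))⁻¹ • (ket0 ⊗ₜ[ℂ] ket1 - ket1 ⊗ₜ[ℂ] ket0)

/-! ## Binary observables and CHSH strategies -/

/-- A binary observable: a symmetric (self-adjoint) involution. -/
structure IsBinaryObservable {H : Type*} [NormedAddCommGroup H] [InnerProductSpace ℂ H]
    (A : H →ₗ[ℂ] H) : Prop where
  symm : A.IsSymmetric
  sq_one : A ∘ₗ A = LinearMap.id

variable {H_A H_B : Type*}
  [NormedAddCommGroup H_A] [InnerProductSpace ℂ H_A] [FiniteDimensional ℂ H_A]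
  [NormedAddCommGroup H_B] [InnerProductSpace ℂ H_B] [FiniteDimensional ℂ H_B]

/-- A CHSH strategy: a shared unit state together with two binary observables per party. -/
structure CHSHStrategy (H_A H_B : Type*)
    [NormedAddCommGroup H_A] [InnerProductSpace ℂ H_A] [FiniteDimensional ℂ H_A]
    [NormedAddCommGroup H_B] [InnerProductSpace ℂ H_B] [FiniteDimensional ℂ H_B] where
  psi : H_A ⊗[ℂ] H_B
  psi_norm : ‖psi‖ = 1
  A0 : H_A →ₗ[ℂ] H_A
  A1 : H_A →ₗ[ℂ] H_A
  B0 : H_B →ₗ[ℂ] H_B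
  B1 : H_B →ₗ[ℂ] H_B
  A0_bin : IsBinaryObservable A0
  A1_bin : IsBinaryObservable A1
  B0_bin : IsBinaryObservable B0
  B1_bin : IsBinaryObservable B1

/-- The general CHSH operator `A0⊗B0 + A0⊗B1 + A1⊗B0 − A1⊗B1`. -/
def CHSH_op (A0 A1 : H_A →ₗ[ℂ] H_A) (B0 B1 : H_B →ₗ[ℂ] H_B) :
    H_A ⊗[ℂ] H_B →ₗ[ℂ] H_A ⊗[ℂ] H_B :=
  TensorProduct.map A0 B0 + TensorProduct.map A0 B1 +
    TensorProduct.map A1 B0 - TensorProduct.map A1 B1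

/-- The CHSH bias `β(S) = Re⟨ψ, CHSH ψ⟩` of a strategy. -/
def chshBias (S : CHSHStrategy H_A H_B) : ℝ :=
  (⟪S.psi, (CHSH_op S.A0 S.A1 S.B0 S.B1) S.psi⟫).re

/-- Alice's observable acting on the shared state. -/
def applyAlice (A : H_A →ₗ[ℂ] H_A) : H_A ⊗[ℂ] H_B →ₗ[ℂ] H_A ⊗[ℂ] H_B :=
  TensorProduct.map A LinearMap.id

/-- Bob's observable acting on the shared state. -/
def applyBob (B : H_B →ₗ[ℂ] H_B) : H_A ⊗[ℂ] H_B →ₗ[ℂ] H_A ⊗[ℂ] H_B :=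
  TensorProduct.map LinearMap.id B

/-! ## The extraction circuit -/

variable {H : Type*} [NormedAddCommGroup H] [InnerProductSpace ℂ H] [FiniteDimensional ℂ H]

/-- Ancilla embedding `v ↦ |aux⟩ ⊗ v`. -/
def embed (aux : Qubit) : H →ₗ[ℂ] (Qubit ⊗[ℂ] H) :=
  (TensorProduct.mk ℂ Qubit H) aux

/-- Controlled gate `|0⟩⟨0| ⊗ I + |1⟩⟨1| ⊗ A`. -/
def controlGate (A : H →ₗ[ℂ] H) : (Qubit ⊗[ℂ] H) →ₗ[ℂ] (Qubit ⊗[ℂ] H) :=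
  TensorProduct.map proj0 (LinearMap.id : H →ₗ[ℂ] H) + TensorProduct.map proj1 A

/-- The extraction unitary `U_A = C_{A1}(H ⊗ I)C_{A0}(H ⊗ I)`. -/
def unitaryUA (A0 A1 : H →ₗ[ℂ] H) : (Qubit ⊗[ℂ] H) →ₗ[ℂ] (Qubit ⊗[ℂ] H) :=
  (controlGate A1) ∘ₗ (TensorProduct.map Hadamard LinearMap.id) ∘ₗ
    (controlGate A0) ∘ₗ (TensorProduct.map Hadamard LinearMap.id)

/-- Alice's extractor `V_A = U_A (|0⟩ ⊗ ·)`. -/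
def VA (A0 A1 : H →ₗ[ℂ] H) : H →ₗ[ℂ] (Qubit ⊗[ℂ] H) :=
  (unitaryUA A0 A1) ∘ₗ (embed ket0)

/-- Bob's rotated extraction unitary `U_B = (R ⊗ I) U_A(B0,B1) (R† ⊗ I)`. -/
def unitaryUB (B0 B1 : H →ₗ[ℂ] H) : (Qubit ⊗[ℂ] H) →ₗ[ℂ] (Qubit ⊗[ℂ] H) :=
  (TensorProduct.map Rotation LinearMap.id) ∘ₗ (unitaryUA B0 B1) ∘ₗ
    (TensorProduct.map (LinearMap.adjoint Rotation) LinearMap.id)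

/-- Bob's rotated ancilla `|aux⟩ = R|0⟩`. -/
def auxState : Qubit := Rotation ket0

/-- Bob's extractor `V_B = U_B (|aux⟩ ⊗ ·)`. -/
def VB (B0 B1 : H →ₗ[ℂ] H) : H →ₗ[ℂ] (Qubit ⊗[ℂ] H) :=
  (unitaryUB B0 B1) ∘ₗ (embed auxState)

/-! ## Tensor regrouping -/

/-- The canonical regrouping isomorphism
`(ℂ² ⊗ H_A) ⊗ (ℂ² ⊗ H_B) ≃ (ℂ² ⊗ ℂ²) ⊗ (H_A ⊗ H_B)`. -/
def regSwap (H_A H_B : Type*)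
    [NormedAddCommGroup H_A] [InnerProductSpace ℂ H_A] [FiniteDimensional ℂ H_A]
    [NormedAddCommGroup H_B] [InnerProductSpace ℂ H_B] [FiniteDimensional ℂ H_B] :
    ((Qubit ⊗[ℂ] H_A) ⊗[ℂ] (Qubit ⊗[ℂ] H_B)) ≃ₗ[ℂ]
      ((Qubit ⊗[ℂ] Qubit) ⊗[ℂ] (H_A ⊗[ℂ] H_B)) :=
  (TensorProduct.assoc ℂ Qubit H_A (Qubit ⊗[ℂ] H_B)).trans <|
    (TensorProduct.congr (LinearEquiv.refl ℂ Qubit)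
      (((TensorProduct.assoc ℂ H_A Qubit H_B).symm.trans
        (TensorProduct.congr (TensorProduct.comm ℂ H_A Qubit) (LinearEquiv.refl ℂ H_B))).trans
          (TensorProduct.assoc ℂ Qubit H_A H_B))).trans
      (TensorProduct.assoc ℂ Qubit Qubit (H_A ⊗[ℂ] H_B)).symm

/-! ## The canonical two-qubit CHSH operator and the constants -/

/-- The canonical two-qubit CHSH operator `K = Z⊗H + Z⊗H' + X⊗H − X⊗H'`. -/
def K : (Qubit ⊗[ℂ] Qubit) →ₗ[ℂ] (Qubit ⊗[ℂ] Qubit) :=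
  TensorProduct.map pauliZ Hadamard + TensorProduct.map pauliZ HadamardPrime +
    TensorProduct.map pauliX Hadamard - TensorProduct.map pauliX HadamardPrime

/-- The constant `c = 128√2` in the anticommutator bounds. -/
def cConst : ℝ := 128 * Real.sqrt 2

/-- The error function `δ(ε) = ε + 4√(cε)`. -/
def delta (ε : ℝ) : ℝ := ε + 4 * Real.sqrt (cConst * ε)

end

open scoped TensorProduct
open Module

/-! In the Bell basis, `K = √2 (Z ⊗ Z + X ⊗ X)` is diagonal with eigenvalues `2√2, 0, 0, -2√2`
on `Φ+, Φ-, Ψ+, Ψ-`. Writing `Ψ = ∑ bellᵢ ⊗ wᵢ`, orthonormality of the Bell basis gives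
`∑ ‖wᵢ‖² = 1` and `Re⟨Ψ, (K ⊗ I) Ψ⟫ = 2√2 (‖w₊‖² - ‖u₋‖²) ≤ 2√2 ‖w₊‖²`, which is the weight bound.
For the distance, `‖Ψ - Φ+ ⊗ junk‖² ≤ (1 - ‖w₊‖)² + (1 - ‖w₊‖²) = 2 - 2‖w₊‖ ≤ 2 (1 - ‖w₊‖²)`. -/

theorem ofReal_sqrt_two_sq : (Real.sqrt 2 : ℂ) ^ 2 = 2 := by
  rw [← Complex.ofReal_pow, Real.sq_sqrt zero_le_two, Complex.ofReal_ofNat]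

theorem inv_ofReal_sqrt_two_mul_self : (Real.sqrt 2 : ℂ)⁻¹ * (Real.sqrt 2 : ℂ)⁻¹ = 2⁻¹ := by
  rw [← mul_inv, ← sq, ofReal_sqrt_two_sq]

section OrthonormalTensor

variable {E F : Type*} [NormedAddCommGroup E] [InnerProductSpace ℂ E] [FiniteDimensional ℂ E]
  [NormedAddCommGroup F] [InnerProductSpace ℂ F] [FiniteDimensional ℂ F]

/-- On a tensor product, `inner ℂ` elaborates to Mathlib's `TensorProduct.instInner`, while the
norm comes from `tensorNormedAddCommGroup`; the two structures agree because `tensorRepr` is the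
coordinate map of the tensor product of the standard orthonormal bases. -/
theorem tensorInnerProductSpace_inner_eq (x y : E ⊗[ℂ] F) :
    @inner ℂ _ (tensorInnerProductSpace E F).toInner x y = inner ℂ x y := by
  let _ : NormedAddCommGroup (E ⊗[ℂ] F) := TensorProduct.instNormedAddCommGroup
  let _ : InnerProductSpace ℂ (E ⊗[ℂ] F) := TensorProduct.instInnerProductSpace
  exact ((stdOrthonormalBasis ℂ E).tensorProduct (stdOrthonormalBasis ℂ F)).repr.inner_map_map x y

theorem tensor_norm_sq_eq_re_inner (x : E ⊗[ℂ] F) : ‖x‖ ^ 2 = (inner ℂ x x).re := by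
  rw [← tensorInnerProductSpace_inner_eq]
  exact norm_sq_eq_re_inner (𝕜 := ℂ) x

theorem orthonormal_bell_of_orthonormal {e : Fin 2 → E} {f : Fin 2 → F}
    (he : Orthonormal ℂ e) (hf : Orthonormal ℂ f) :
    Orthonormal ℂ ((Real.sqrt 2 : ℂ)⁻¹ •
      ![e 0 ⊗ₜ[ℂ] f 0 + e 1 ⊗ₜ[ℂ] f 1, e 0 ⊗ₜ[ℂ] f 0 - e 1 ⊗ₜ[ℂ] f 1,
        e 0 ⊗ₜ[ℂ] f 1 + e 1 ⊗ₜ[ℂ] f 0, e 0 ⊗ₜ[ℂ] f 1 - e 1 ⊗ₜ[ℂ] f 0]) := by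
  have he' := orthonormal_iff_ite.mp he
  have hf' := orthonormal_iff_ite.mp hf
  rw [orthonormal_iff_ite]
  intro i j
  fin_cases i <;> fin_cases j <;>
    simp only [Fin.zero_eta, Fin.mk_one, Fin.reduceFinMk, Pi.smul_apply, Matrix.cons_val,
      inner_add_left, inner_add_right, inner_sub_left, inner_sub_right, inner_smul_left,
      inner_smul_right, tensorInnerProductSpace_inner_eq, TensorProduct.inner_tmul, he', hf',
      map_inv₀, Complex.conj_ofReal] <;>
    norm_num [Fin.ext_iff, mul_add, mul_sub, inv_ofReal_sqrt_two_mul_self]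

namespace Orthonormal

variable {ι : Type*} [Fintype ι] {b : ι → E}

theorem inner_sum_tmul_sum_tmul (hb : Orthonormal ℂ b) (v w : ι → F) :
    inner ℂ (∑ i, b i ⊗ₜ[ℂ] v i) (∑ i, b i ⊗ₜ[ℂ] w i) = ∑ i, inner ℂ (v i) (w i) := by
  classical
  rw [← tensorInnerProductSpace_inner_eq]
  simp only [sum_inner, inner_sum]
  simp [tensorInnerProductSpace_inner_eq, orthonormal_iff_ite.mp hb]

theorem norm_sum_tmul_sq (hb : Orthonormal ℂ b) (v : ι → F) :
    ‖∑ i, b i ⊗ₜ[ℂ] v i‖ ^ 2 = ∑ i, ‖v i‖ ^ 2 := by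
  simp [tensor_norm_sq_eq_re_inner, hb.inner_sum_tmul_sum_tmul, Complex.re_sum,
    ← Complex.ofReal_pow]

theorem re_inner_map_id_sum_tmul (hb : Orthonormal ℂ b) {A : E →ₗ[ℂ] E} {μ : ι → ℝ}
    (hA : ∀ i, A (b i) = (μ i : ℂ) • b i) (v : ι → F) :
    (inner ℂ (∑ i, b i ⊗ₜ[ℂ] v i) (TensorProduct.map A LinearMap.id (∑ i, b i ⊗ₜ[ℂ] v i))).re
      = ∑ i, μ i * ‖v i‖ ^ 2 := by
  have hmap : TensorProduct.map A LinearMap.id (∑ i, b i ⊗ₜ[ℂ] v i)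
      = ∑ i, b i ⊗ₜ[ℂ] ((μ i : ℂ) • v i) := by
    simp [hA, TensorProduct.smul_tmul]
  rw [hmap, hb.inner_sum_tmul_sum_tmul, Complex.re_sum]
  simp [inner_self_eq_norm_sq_to_K, ← Complex.ofReal_pow]

end Orthonormal

end OrthonormalTensor

@[simp] theorem norm_ket0 : ‖ket0‖ = 1 := by simp [ket0]

@[simp] theorem norm_ket1 : ‖ket1‖ = 1 := by simp [ket1]

@[simp] theorem inner_ket0_ket1 : inner ℂ ket0 ket1 = 0 := by
  simp [ket0, ket1, EuclideanSpace.inner_single_left]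

@[simp] theorem inner_ket1_ket0 : inner ℂ ket1 ket0 = 0 := by
  simp [ket0, ket1, EuclideanSpace.inner_single_left]

theorem orthonormal_ket : Orthonormal ℂ ![ket0, ket1] := by
  rw [orthonormal_iff_ite]
  intro i j
  fin_cases i <;> fin_cases j <;> simp

@[simp] theorem pauliZ_ket0 : pauliZ ket0 = ket0 := by simp [pauliZ, ketbra]

@[simp] theorem pauliZ_ket1 : pauliZ ket1 = -ket1 := by simp [pauliZ, ketbra]

@[simp] theorem pauliX_ket0 : pauliX ket0 = ket1 := by simp [pauliX, ketbra]

@[simp] theorem pauliX_ket1 : pauliX ket1 = ket0 := by simp [pauliX, ketbra]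

theorem Hadamard_add_HadamardPrime : Hadamard + HadamardPrime = (Real.sqrt 2 : ℂ) • pauliZ := by
  rw [Hadamard, HadamardPrime, ← smul_add, add_add_sub_cancel, ← two_smul ℂ, smul_smul]
  congr 1
  field_simp
  exact ofReal_sqrt_two_sq.symm

theorem Hadamard_sub_HadamardPrime : Hadamard - HadamardPrime = (Real.sqrt 2 : ℂ) • pauliX := by
  rw [Hadamard, HadamardPrime, ← smul_sub, add_sub_sub_cancel, ← two_smul ℂ, smul_smul]
  congr 1
  field_simp
  exact ofReal_sqrt_two_sq.symm

theorem K_tmul (a b : Qubit) :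
    K (a ⊗ₜ[ℂ] b) = (Real.sqrt 2 : ℂ) • (pauliZ a ⊗ₜ[ℂ] pauliZ b + pauliX a ⊗ₜ[ℂ] pauliX b) := by
  have hZ := LinearMap.congr_fun Hadamard_add_HadamardPrime b
  have hX := LinearMap.congr_fun Hadamard_sub_HadamardPrime b
  simp only [LinearMap.add_apply, LinearMap.sub_apply, LinearMap.smul_apply] at hZ hX
  calc K (a ⊗ₜ[ℂ] b)
      = pauliZ a ⊗ₜ[ℂ] (Hadamard b + HadamardPrime b)
        + pauliX a ⊗ₜ[ℂ] (Hadamard b - HadamardPrime b) := by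
        simp only [K, LinearMap.add_apply, LinearMap.sub_apply, TensorProduct.map_tmul,
          TensorProduct.tmul_add, TensorProduct.tmul_sub]
        abel
    _ = _ := by rw [hZ, hX, TensorProduct.tmul_smul, TensorProduct.tmul_smul, smul_add]

noncomputable def bell : Fin 4 → Qubit ⊗[ℂ] Qubit :=
  ![bellPhiPlus, bellPhiMinus, bellPsiPlus, bellPsiMinus]

theorem bell_eq : bell = (Real.sqrt 2 : ℂ)⁻¹ •
    ![ket0 ⊗ₜ[ℂ] ket0 + ket1 ⊗ₜ[ℂ] ket1, ket0 ⊗ₜ[ℂ] ket0 - ket1 ⊗ₜ[ℂ] ket1,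
      ket0 ⊗ₜ[ℂ] ket1 + ket1 ⊗ₜ[ℂ] ket0, ket0 ⊗ₜ[ℂ] ket1 - ket1 ⊗ₜ[ℂ] ket0] := by
  ext i : 1
  fin_cases i <;> rfl

theorem orthonormal_bell : Orthonormal ℂ bell := by
  have h := orthonormal_bell_of_orthonormal orthonormal_ket orthonormal_ket
  simp only [Matrix.cons_val_zero, Matrix.cons_val_one] at h
  rwa [bell_eq]

noncomputable def bellEigenvalue : Fin 4 → ℝ := ![2 * Real.sqrt 2, 0, 0, -(2 * Real.sqrt 2)]

theorem K_bell (i : Fin 4) : K (bell i) = (bellEigenvalue i : ℂ) • bell i := by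
  rw [bell_eq]
  fin_cases i <;>
    simp only [Fin.zero_eta, Fin.mk_one, Fin.reduceFinMk, Pi.smul_apply, Matrix.cons_val,
      bellEigenvalue, map_add, map_sub, map_smul, K_tmul, pauliZ_ket0, pauliZ_ket1, pauliX_ket0,
      pauliX_ket1, TensorProduct.tmul_neg, TensorProduct.neg_tmul] <;>
    match_scalars <;> ring

theorem norm_sub_inv_norm_smul_le {V : Type*} [NormedAddCommGroup V] [NormedSpace ℂ V] (v : V) :
    ‖v - ((‖v‖ : ℂ))⁻¹ • v‖ ≤ |‖v‖ - 1| := by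
  rcases eq_or_ne v 0 with rfl | hv
  · simp
  refine le_of_eq ?_
  calc ‖v - ((‖v‖ : ℂ))⁻¹ • v‖ = ‖(1 - ((‖v‖ : ℂ))⁻¹) • v‖ := by rw [sub_smul, one_smul]
    _ = |‖v‖ - 1| := by
      rw [norm_smul, ← Complex.ofReal_inv, ← Complex.ofReal_one, ← Complex.ofReal_sub,
        Complex.norm_real, Real.norm_eq_abs, ← abs_norm v, ← abs_mul, abs_norm, sub_mul, one_mul,
        inv_mul_cancel₀ (norm_ne_zero_iff.mpr hv)]

section BellExpansion

variable {W : Type*} [NormedAddCommGroup W] [InnerProductSpace ℂ W] [FiniteDimensional ℂ W]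

theorem norm_sum_bell_tmul_sq (w : Fin 4 → W) :
    ‖∑ i, bell i ⊗ₜ[ℂ] w i‖ ^ 2 = ‖w 0‖ ^ 2 + ‖w 1‖ ^ 2 + ‖w 2‖ ^ 2 + ‖w 3‖ ^ 2 := by
  rw [orthonormal_bell.norm_sum_tmul_sq, Fin.sum_univ_four]

theorem re_inner_sum_bell_tmul_map_K (w : Fin 4 → W) :
    (⟪∑ i, bell i ⊗ₜ[ℂ] w i, TensorProduct.map K LinearMap.id (∑ i, bell i ⊗ₜ[ℂ] w i)⟫).re
      = 2 * Real.sqrt 2 * (‖w 0‖ ^ 2 - ‖w 3‖ ^ 2) := by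
  rw [orthonormal_bell.re_inner_map_id_sum_tmul K_bell, Fin.sum_univ_four]
  simp only [bellEigenvalue, Matrix.cons_val]
  ring

theorem norm_sum_bell_tmul_sub_sq_le (w : Fin 4 → W) (hw : ‖∑ i, bell i ⊗ₜ[ℂ] w i‖ = 1) :
    ‖∑ i, bell i ⊗ₜ[ℂ] w i - bellPhiPlus ⊗ₜ[ℂ] (((‖w 0‖ : ℂ))⁻¹ • w 0)‖ ^ 2
      ≤ 2 - 2 * ‖w 0‖ := by
  have hsub : ∑ i, bell i ⊗ₜ[ℂ] w i - bellPhiPlus ⊗ₜ[ℂ] (((‖w 0‖ : ℂ))⁻¹ • w 0)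
      = ∑ i, bell i ⊗ₜ[ℂ] ![w 0 - ((‖w 0‖ : ℂ))⁻¹ • w 0, w 1, w 2, w 3] i := by
    simp only [Fin.sum_univ_four, bell, Matrix.cons_val, TensorProduct.tmul_sub]
    abel
  have hsq : ‖w 0 - ((‖w 0‖ : ℂ))⁻¹ • w 0‖ ^ 2 ≤ (‖w 0‖ - 1) ^ 2 := by
    simpa only [sq_abs] using pow_le_pow_left₀ (norm_nonneg _) (norm_sub_inv_norm_smul_le (w 0)) 2
  have hweights := norm_sum_bell_tmul_sq w
  rw [hw, one_pow] at hweights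
  rw [hsub, norm_sum_bell_tmul_sq]
  simp only [Matrix.cons_val]
  nlinarith

end BellExpansion

theorem top_eigenspace_closeness_general
    {W : Type*} [NormedAddCommGroup W] [InnerProductSpace ℂ W] [FiniteDimensional ℂ W]
    (δ : ℝ)
    (Ψ : (Qubit ⊗[ℂ] Qubit) ⊗[ℂ] W) (hΨ : ‖Ψ‖ = 1)
    (wP wM uP uM : W)
    (hdecomp : Ψ = bellPhiPlus ⊗ₜ[ℂ] wP + bellPhiMinus ⊗ₜ[ℂ] wM
        + bellPsiPlus ⊗ₜ[ℂ] uP + bellPsiMinus ⊗ₜ[ℂ] uM)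
    (hexp : (⟪Ψ, (TensorProduct.map K (LinearMap.id : W →ₗ[ℂ] W)) Ψ⟫).re
        ≥ 2 * Real.sqrt 2 - δ) :
    ‖wP‖ ^ 2 ≥ 1 - δ / (2 * Real.sqrt 2) ∧
    ‖Ψ - bellPhiPlus ⊗ₜ[ℂ] (((‖wP‖ : ℂ))⁻¹ • wP)‖ ≤ Real.sqrt (δ / Real.sqrt 2) := by
  have hΨ_eq : Ψ = ∑ i, bell i ⊗ₜ[ℂ] ![wP, wM, uP, uM] i := by
    simp only [hdecomp, Fin.sum_univ_four, bell, Matrix.cons_val]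
  rw [hΨ_eq] at hΨ hexp ⊢
  have hweights := norm_sum_bell_tmul_sq ![wP, wM, uP, uM]
  rw [hΨ, one_pow] at hweights
  rw [re_inner_sum_bell_tmul_map_K] at hexp
  simp only [Matrix.cons_val] at hweights hexp
  have hs : 0 < 2 * Real.sqrt 2 := by positivity
  have hweight : 1 - δ / (2 * Real.sqrt 2) ≤ ‖wP‖ ^ 2 := by
    rw [one_sub_div hs.ne', div_le_iff₀ hs]
    nlinarith [sq_nonneg ‖uM‖]
  refine ⟨hweight, Real.le_sqrt_of_sq_le ?_⟩
  have hwP : ‖wP‖ ≤ 1 := by nlinarith [sq_nonneg ‖wM‖, sq_nonneg ‖uP‖, sq_nonneg ‖uM‖]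
  calc _ ≤ 2 - 2 * ‖wP‖ := norm_sum_bell_tmul_sub_sq_le _ hΨ
    _ ≤ 2 * (1 - ‖wP‖ ^ 2) := by nlinarith [norm_nonneg wP]
    _ ≤ 2 * (δ / (2 * Real.sqrt 2)) := by linarith
    _ = δ / Real.sqrt 2 := by field_simp

/-- **Top-eigenspace closeness lemma.** -/
theorem top_eigenspace_closeness
    {W : Type*} [NormedAddCommGroup W] [InnerProductSpace ℂ W] [FiniteDimensional ℂ W]
    (δ : ℝ) (hδ0 : 0 ≤ δ) (hδ1 : δ < 2 * Real.sqrt 2)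
    (Ψ : (Qubit ⊗[ℂ] Qubit) ⊗[ℂ] W) (hΨ : ‖Ψ‖ = 1)
    (wP wM uP uM : W)
    (hdecomp : Ψ = bellPhiPlus ⊗ₜ[ℂ] wP + bellPhiMinus ⊗ₜ[ℂ] wM
        + bellPsiPlus ⊗ₜ[ℂ] uP + bellPsiMinus ⊗ₜ[ℂ] uM)
    (hexp : (⟪Ψ, (TensorProduct.map K (LinearMap.id : W →ₗ[ℂ] W)) Ψ⟫).re
        ≥ 2 * Real.sqrt 2 - δ) :
    ‖wP‖ ^ 2 ≥ 1 - δ / (2 * Real.sqrt 2) ∧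
    ‖Ψ - bellPhiPlus ⊗ₜ[ℂ] (((‖wP‖ : ℂ))⁻¹ • wP)‖ ≤ Real.sqrt (δ / Real.sqrt 2) :=
  top_eigenspace_closeness_general δ Ψ hΨ wP wM uP uM hdecomp hexp
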